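/- For all n ≥ 3, χ(J_±(n,3,-2)) ≤ 4⌈log₂⌈log₂ n⌉⌉ + 6. -/

import Mathlib

open SimpleGraph Finset

/-- Vertices of the Johnson-type graph: vectors in `{-1,0,1}^n` with exactly `k`
nonzero coordinates. -/
def JVert (n k : ℕ) : Type :=
  {v : Fin n → ℤ // (∀ i, v i = -1 ∨ v i = 0 ∨ v i = 1) ∧
    (Finset.univ.filter (fun i => v i ≠ 0)).card = k}

/-- The Johnson-type graph `J_±(n,k,t)`: edges join pairs with scalar product `t`. -/
def Jpm (n k : ℕ) (t : ℤ) : SimpleGraph (JVert n k) where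
  Adj u v := u ≠ v ∧ ∑ i, u.1 i * v.1 i = t
  symm := ⟨by
    intro u v ⟨h1, h2⟩
    refine ⟨h1.symm, ?_⟩
    rw [← h2]
    exact Finset.sum_congr rfl (fun i _ => mul_comm _ _)⟩
  loopless := ⟨by intro u ⟨h1, _⟩; exact h1 rfl⟩

/-!
Two adjacent vertices `u, v` have opposite signs at two common support coordinates. If `u` and
`v` have the same sign pattern, a finite check shows that the pattern alternates and that the
supports are `a < b < c` and `b < c < d` (up to swapping `u` and `v`); every other pattern can
therefore be its own colour. Alternating vertices are coloured by a proper colouring of the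
iterated shift graph on triples: with `m` the most significant differing bit, the triple
`a < b < c` gets the order of `m a b` and `m b c` together with `m (m a b) (m b c)`. Since
consecutive values of `m` along an increasing chain differ, the triples `(a, b, c)` and
`(b, c, d)` get different colours, and since `m` is below `⌈log₂ n⌉` on `[0, n)`, only
`2 ⌈log₂ ⌈log₂ n⌉⌉` colours are needed.
-/

namespace Nat

def highestDiffBit (x y : ℕ) : ℕ := log2 (x ^^^ y)

theorem highestDiffBit_comm (x y : ℕ) : highestDiffBit x y = highestDiffBit y x := by
  rw [highestDiffBit, highestDiffBit, Nat.xor_comm]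

theorem highestDiffBit_lt {x y B : ℕ} (hxy : x ≠ y) (hx : x < 2 ^ B) (hy : y < 2 ^ B) :
    highestDiffBit x y < B :=
  (log2_lt (by simpa using hxy)).2 (xor_lt_two_pow hx hy)

theorem testBit_highestDiffBit_of_lt {x y : ℕ} (h : x < y) :
    x.testBit (highestDiffBit x y) = false ∧ y.testBit (highestDiffBit x y) = true := by
  have hxy : x ^^^ y ≠ 0 := by simpa using h.ne
  have hdiff := testBit_log2 hxy
  have hagree : ∀ j, highestDiffBit x y < j → y.testBit j = x.testBit j := fun j hj => by
    have := testBit_eq_false_of_lt ((log2_lt hxy).1 hj)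
    rw [testBit_xor, bne_eq_false_iff_eq] at this
    exact this.symm
  rw [testBit_xor] at hdiff
  cases hx : x.testBit (highestDiffBit x y) <;> cases hy : y.testBit (highestDiffBit x y) <;>
    simp_all [highestDiffBit]
  exact h.not_gt (lt_of_testBit _ hy hx hagree)

/-- The bit that separates `x < y` is set in `y`, the one that separates `y < z` is clear in
`y`. -/
theorem highestDiffBit_ne_of_lt_of_lt {x y z : ℕ} (hxy : x < y) (hyz : y < z) :
    highestDiffBit x y ≠ highestDiffBit y z := by
  intro h
  have h₁ := (testBit_highestDiffBit_of_lt hxy).2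
  rw [h, (testBit_highestDiffBit_of_lt hyz).1] at h₁
  exact Bool.false_ne_true h₁

def shiftColor (a b c : ℕ) : Bool × ℕ :=
  (decide (highestDiffBit a b < highestDiffBit b c),
    highestDiffBit (highestDiffBit a b) (highestDiffBit b c))

theorem shiftColor_ne {a b c d : ℕ} (hab : a < b) (hbc : b < c) (hcd : c < d) :
    shiftColor a b c ≠ shiftColor b c d := by
  intro h
  simp only [shiftColor, Prod.mk.injEq, decide_eq_decide] at h
  obtain ⟨horder, hcolor⟩ := h
  set p := highestDiffBit a b
  set q := highestDiffBit b c
  set r := highestDiffBit c d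
  have hpq : p ≠ q := highestDiffBit_ne_of_lt_of_lt hab hbc
  have hqr : q ≠ r := highestDiffBit_ne_of_lt_of_lt hbc hcd
  rcases hpq.lt_or_gt with hpq | hqp
  · exact highestDiffBit_ne_of_lt_of_lt hpq (horder.1 hpq) hcolor
  · have hrq : r < q := hqr.symm.lt_of_le (not_lt.1 fun hqr => hqp.not_gt (horder.2 hqr))
    rw [highestDiffBit_comm p q, highestDiffBit_comm q r] at hcolor
    exact highestDiffBit_ne_of_lt_of_lt hrq hqp hcolor.symm

theorem shiftColor_snd_lt {a b c n : ℕ} (hab : a < b) (hbc : b < c) (hcn : c < n) :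
    (shiftColor a b c).2 < clog 2 (clog 2 n) := by
  have hn : n ≤ 2 ^ clog 2 n := le_pow_clog one_lt_two n
  have hab' := highestDiffBit_lt (B := clog 2 n) hab.ne (by omega) (by omega)
  have hbc' := highestDiffBit_lt (B := clog 2 n) hbc.ne (by omega) (by omega)
  exact highestDiffBit_lt (highestDiffBit_ne_of_lt_of_lt hab hbc)
    (hab'.trans_le (le_pow_clog one_lt_two _)) (hbc'.trans_le (le_pow_clog one_lt_two _))

end Nat

theorem Finset.exists_lt_eq_neg_one_of_sum_le_neg_two {ι : Type*} [LinearOrder ι]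
    (s : Finset ι) {f : ι → ℤ} (hf : ∀ i ∈ s, -1 ≤ f i) (hs : ∑ i ∈ s, f i ≤ -2) :
    ∃ i ∈ s, ∃ j ∈ s, i < j ∧ f i = -1 ∧ f j = -1 := by
  have hcard : -(#{i ∈ s | f i = -1} : ℤ) ≤ ∑ i ∈ s, f i := by
    rw [← sum_boole, ← sum_neg_distrib]
    refine sum_le_sum fun i hi => ?_
    have := hf i hi
    split_ifs <;> omega
  obtain ⟨i, hi, j, hj, hij⟩ := one_lt_card.1 (show 1 < #{i ∈ s | f i = -1} by omega)
  simp only [mem_filter] at hi hj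
  rcases hij.lt_or_gt with hij | hji
  · exact ⟨i, hi.1, j, hj.1, hij, hi.2, hj.2⟩
  · exact ⟨j, hj.1, i, hi.1, hji, hj.2, hi.2⟩

def Alternating (s : Fin 3 → Bool) : Prop := s 0 ≠ s 1 ∧ s 1 ≠ s 2

instance : DecidablePred Alternating := fun _ => inferInstanceAs (Decidable (_ ∧ _))

theorem alternating_and_eq_shift_of_ne_of_ne {s : Fin 3 → Bool} {k k' l l' : Fin 3}
    (hk : k < k') (hl : l < l') (h : s k ≠ s l) (h' : s k' ≠ s l') :
    Alternating s ∧ (k = 0 ∧ k' = 1 ∧ l = 1 ∧ l' = 2 ∨ k = 1 ∧ k' = 2 ∧ l = 0 ∧ l' = 1) := by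
  revert s k k' l l'
  decide

namespace JVert

variable {n : ℕ}

noncomputable def pos (u : JVert n 3) : Fin 3 ↪o Fin n :=
  (univ.filter fun i => u.1 i ≠ 0).orderEmbOfFin u.2.2

noncomputable def signs (u : JVert n 3) (k : Fin 3) : Bool :=
  decide (0 < u.1 (u.pos k))

theorem exists_pos_eq {u : JVert n 3} {i : Fin n} (hi : u.1 i ≠ 0) : ∃ k, u.pos k = i := by
  rw [← Set.mem_range, pos, range_orderEmbOfFin]
  simpa using hi

theorem neg_one_le_mul (u v : JVert n 3) (i : Fin n) : -1 ≤ u.1 i * v.1 i := by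
  rcases u.2.1 i with h | h | h <;> rcases v.2.1 i with h' | h' | h' <;> simp [h, h']

theorem exists_pos_of_mul_eq_neg_one {u v : JVert n 3} {i : Fin n} (h : u.1 i * v.1 i = -1) :
    ∃ k l, u.pos k = i ∧ v.pos l = i ∧ u.signs k ≠ v.signs l := by
  have hu : u.1 i ≠ 0 := left_ne_zero_of_mul (by rw [h]; norm_num)
  have hv : v.1 i ≠ 0 := right_ne_zero_of_mul (by rw [h]; norm_num)
  obtain ⟨k, rfl⟩ := exists_pos_eq hu
  obtain ⟨l, hl⟩ := exists_pos_eq hv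
  refine ⟨k, l, rfl, hl, ?_⟩
  rw [signs, signs, hl]
  rcases u.2.1 (u.pos k) with h₁ | h₁ | h₁ <;> rcases v.2.1 (u.pos k) with h₂ | h₂ | h₂ <;>
    simp_all

theorem exists_opposite_pos {u v : JVert n 3} (h : ∑ i, u.1 i * v.1 i = -2) :
    ∃ k k' l l' : Fin 3, k < k' ∧ l < l' ∧ u.pos k = v.pos l ∧ u.pos k' = v.pos l' ∧
      u.signs k ≠ v.signs l ∧ u.signs k' ≠ v.signs l' := by
  obtain ⟨i, -, j, -, hij, hi, hj⟩ := univ.exists_lt_eq_neg_one_of_sum_le_neg_two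
    (fun i _ => neg_one_le_mul u v i) h.le
  obtain ⟨k, l, rfl, hl, hkl⟩ := exists_pos_of_mul_eq_neg_one hi
  obtain ⟨k', l', rfl, hl', hkl'⟩ := exists_pos_of_mul_eq_neg_one hj
  refine ⟨k, k', l, l', u.pos.lt_iff_lt.1 hij, v.pos.lt_iff_lt.1 ?_, hl.symm, hl'.symm, hkl, hkl'⟩
  rwa [hl, hl']

def tripleColor (A : Fin 3 ↪o Fin n) : Bool × Fin (Nat.clog 2 (Nat.clog 2 n)) :=
  ((Nat.shiftColor (A 0) (A 1) (A 2)).1,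
    ⟨(Nat.shiftColor (A 0) (A 1) (A 2)).2,
      Nat.shiftColor_snd_lt (A.lt_iff_lt.2 (by decide)) (A.lt_iff_lt.2 (by decide)) (A 2).2⟩)

theorem tripleColor_ne {A B : Fin 3 ↪o Fin n} (h₁ : A 1 = B 0) (h₂ : A 2 = B 1) :
    tripleColor A ≠ tripleColor B := by
  intro h
  apply Nat.shiftColor_ne (A.lt_iff_lt.2 (show (0 : Fin 3) < 1 by decide))
    (A.lt_iff_lt.2 (show (1 : Fin 3) < 2 by decide))
    (show (A 2 : ℕ) < B 2 by rw [h₂]; exact B.lt_iff_lt.2 (by decide))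
  simp only [tripleColor, Prod.mk.injEq, Fin.mk.injEq] at h
  rw [← h₁, ← h₂] at h
  exact Prod.ext h.1 h.2

abbrev Palette (n : ℕ) : Type :=
  ({s : Fin 3 → Bool // Alternating s} × Bool × Fin (Nat.clog 2 (Nat.clog 2 n))) ⊕
    {s : Fin 3 → Bool // ¬ Alternating s}

theorem card_palette : Fintype.card (Palette n) = 4 * Nat.clog 2 (Nat.clog 2 n) + 6 := by
  have h₁ : Fintype.card {s : Fin 3 → Bool // Alternating s} = 2 := by decide
  have h₂ : Fintype.card {s : Fin 3 → Bool // ¬ Alternating s} = 6 := by decide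
  simp only [Fintype.card_sum, Fintype.card_prod, h₁, h₂, Fintype.card_bool, Fintype.card_fin]
  ring

noncomputable def color (u : JVert n 3) : Palette n :=
  if h : Alternating u.signs then .inl (⟨u.signs, h⟩, tripleColor u.pos) else .inr ⟨u.signs, h⟩

theorem signs_eq_of_color_eq {u v : JVert n 3} (h : u.color = v.color) : u.signs = v.signs := by
  unfold color at h
  split_ifs at h <;> simp_all

theorem tripleColor_eq_of_color_eq {u v : JVert n 3} (h : u.color = v.color)
    (hu : Alternating u.signs) : tripleColor u.pos = tripleColor v.pos := by
  have hv : Alternating v.signs := signs_eq_of_color_eq h ▸ hu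
  simp_all [color]

theorem color_ne_of_sum_eq_neg_two {u v : JVert n 3} (h : ∑ i, u.1 i * v.1 i = -2) :
    u.color ≠ v.color := by
  intro hc
  obtain ⟨k, k', l, l', hk, hl, hkl, hkl', hs, hs'⟩ := exists_opposite_pos h
  rw [signs_eq_of_color_eq hc] at hs hs'
  obtain ⟨halt, ⟨rfl, rfl, rfl, rfl⟩ | ⟨rfl, rfl, rfl, rfl⟩⟩ :=
    alternating_and_eq_shift_of_ne_of_ne hk hl hs hs'
  · exact tripleColor_ne hkl.symm hkl'.symm (tripleColor_eq_of_color_eq hc.symm halt)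
  · exact tripleColor_ne hkl hkl' (tripleColor_eq_of_color_eq hc (signs_eq_of_color_eq hc ▸ halt))

end JVert

theorem Jpm_three_neg_two_upper_general (n : ℕ) :
    (Jpm n 3 (-2)).Colorable (4 * Nat.clog 2 (Nat.clog 2 n) + 6) := by
  have C : (Jpm n 3 (-2)).Coloring (JVert.Palette n) :=
    Coloring.mk JVert.color fun huv => JVert.color_ne_of_sum_eq_neg_two huv.2
  simpa only [JVert.card_palette] using C.colorable

/-- `χ(J_±(n,3,-2)) ≤ 4⌈log₂⌈log₂ n⌉⌉ + 6` for `n ≥ 3`. -/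
theorem Jpm_three_neg_two_upper (n : ℕ) (hn : 3 ≤ n) :
    (Jpm n 3 (-2)).Colorable (4 * Nat.clog 2 (Nat.clog 2 n) + 6) :=
  Jpm_three_neg_two_upper_general n
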